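/- Let R ⊆ S be a finite flat extension of ℤ-finitely generated integral domains of characteristic zero, with fraction fields K ⊆ L, and let X be an arithmetic scheme over R. Then X(R)^{(1)} ⊆ X_S(S)^{(1)} ∩ X_K(K), where points of X(K) are viewed in X_L(L) via base change. -/

import Mathlib

open AlgebraicGeometry CategoryTheory CategoryTheory.Limits TopologicalSpace

universe u

noncomputable section

namespace ArithHilbert

/-! ### Basic notions -/

/-- The canonical morphism `Spec K ⟶ Spec R` induced by `algebraMap R K`. -/
def specOver (R K : Type u) [CommRing R] [CommRing K] [Algebra R K] :
    Spec (CommRingCat.of K) ⟶ Spec (CommRingCat.of R) :=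
  Spec.map (CommRingCat.ofHom (algebraMap R K))

/-- The complement of the open `U ⊆ Spec R` has codimension at least two, i.e. every prime
in the complement has height at least two. -/
def ComplCodimGeTwo {R : Type u} [CommRing R] (U : (Spec (CommRingCat.of R)).Opens) : Prop :=
  ∀ p : PrimeSpectrum R, p ∉ U.1 → 2 ≤ Order.height p

/-- A `K`-rational point `x` of an `R`-scheme `X` is near-`R`-integral if it extends to a
morphism `U → X` over `R` for some dense open `U ⊆ Spec R` with complement of codimension
at least two. -/
def IsNearIntegral {R K : Type u} [CommRing R] [Field K] [Algebra R K] {X : Scheme.{u}}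
    (f : X ⟶ Spec (CommRingCat.of R)) (x : Spec (CommRingCat.of K) ⟶ X) : Prop :=
  ∃ U : (Spec (CommRingCat.of R)).Opens, Dense (U.1 : Set (PrimeSpectrum R)) ∧
    ComplCodimGeTwo U ∧
    ∃ (w : (U : Scheme.{u}) ⟶ X) (t : Spec (CommRingCat.of K) ⟶ (U : Scheme.{u})),
      w ≫ f = U.ι ∧ t ≫ U.ι = specOver R K ∧ t ≫ w = x

/-- `f : X ⟶ B` is separated and of finite type. -/
def IsFiniteTypeSeparated {X B : Scheme.{u}} (f : X ⟶ B) : Prop :=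
  IsSeparated f ∧ LocallyOfFiniteType f ∧ QuasiCompact f

/-- `X` is an arithmetic scheme over `R` (via `f`): integral, separated, of finite type and
dominant over `Spec R`. -/
def IsArithmeticOver {R : Type u} [CommRing R] {X : Scheme.{u}}
    (f : X ⟶ Spec (CommRingCat.of R)) : Prop :=
  IsIntegral X ∧ IsFiniteTypeSeparated f ∧ IsDominant f

/-- The `K`-rational points of a `K`-scheme `X` (with structure morphism `f`), i.e. the
sections of `f`. -/
def pts {K : Type u} [Field K] {X : Scheme.{u}} (f : X ⟶ Spec (CommRingCat.of K)) :
    Set (Spec (CommRingCat.of K) ⟶ X) :=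
  {x | x ≫ f = 𝟙 (Spec (CommRingCat.of K))}

/-- The set of points of (the topological space of) `X` hit by a set of rational points. -/
def imagePts {T X : Scheme.{u}} (s : Set (T ⟶ X)) : Set X :=
  ⋃ x ∈ s, Set.range x.base

/-! ### Function fields, degree and separability of dominant morphisms -/

lemma genericPoint_specializes_of_dominant {Y X : Scheme.{u}} (π : Y ⟶ X)
    (hY : IrreducibleSpace Y) (hX : IrreducibleSpace X) (hdom : IsDominant π) :
    (π.base (genericPoint Y)) ⤳ (genericPoint X) := by
  rw [specializes_iff_mem_closure]
  have h1 : Set.range π.base ⊆ closure {π.base (genericPoint Y)} := by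
    rintro x ⟨y, rfl⟩
    have h : (genericPoint Y) ⤳ y := (genericPoint_spec Y).specializes trivial
    exact specializes_iff_mem_closure.mp (h.map π.base.hom.continuous)
  have h4 : closure (Set.range π.base) ⊆ closure {π.base (genericPoint Y)} :=
    closure_minimal h1 isClosed_closure
  exact h4 (by rw [hdom.denseRange.closure_eq]; trivial)

/-- The induced map on function fields of a dominant morphism of irreducible schemes. -/
def ffMap {Y X : Scheme.{u}} (π : Y ⟶ X) (hY : IrreducibleSpace Y) (hX : IrreducibleSpace X)
    (hdom : IsDominant π) : X.functionField ⟶ Y.functionField :=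
  X.presheaf.stalkSpecializes (genericPoint_specializes_of_dominant π hY hX hdom) ≫
    π.stalkMap (genericPoint Y)

/-- The degree of a dominant morphism of integral schemes: the degree of the induced
extension of function fields. -/
def ffDegree {Y X : Scheme.{u}} (π : Y ⟶ X) (hY : IsIntegral Y) (hX : IsIntegral X)
    (hdom : IsDominant π) : ℕ :=
  letI := (ffMap π inferInstance inferInstance hdom).hom.toAlgebra
  Module.finrank X.functionField Y.functionField

/-- A dominant morphism of integral schemes is generically finite if the induced extension
of function fields is finite. -/
def FfGenericallyFinite {Y X : Scheme.{u}} (π : Y ⟶ X) (hY : IsIntegral Y) (hX : IsIntegral X)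
    (hdom : IsDominant π) : Prop :=
  letI := (ffMap π inferInstance inferInstance hdom).hom.toAlgebra
  Module.Finite X.functionField Y.functionField

/-- A dominant morphism of integral schemes is separable if the induced extension of
function fields is separable. -/
def FfSeparable {Y X : Scheme.{u}} (π : Y ⟶ X) (hY : IsIntegral Y) (hX : IsIntegral X)
    (hdom : IsDominant π) : Prop :=
  letI := (ffMap π inferInstance inferInstance hdom).hom.toAlgebra
  Algebra.IsSeparable X.functionField Y.functionField

/-- `π` is birational: the induced map on function fields is an isomorphism. -/
def FfBirational {Y X : Scheme.{u}} (π : Y ⟶ X) (hY : IrreducibleSpace Y)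
    (hX : IrreducibleSpace X) (hdom : IsDominant π) : Prop :=
  Function.Bijective (ffMap π hY hX hdom)

/-! ### Thin sets -/

/-- `π : Y ⟶ X` is a cover as used in the definition of thin sets: `Y` is an integral
`K`-variety (via `π ≫ f`) and `π` is dominant, generically finite and separable of
degree at least two. -/
def IsThinCover {K : Type u} [Field K] {X Y : Scheme.{u}} (f : X ⟶ Spec (CommRingCat.of K))
    (π : Y ⟶ X) : Prop :=
  IsFiniteTypeSeparated (π ≫ f) ∧
  ∃ (hY : IsIntegral Y) (hX : IsIntegral X) (hdom : IsDominant π),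
    FfGenericallyFinite π hY hX hdom ∧ FfSeparable π hY hX hdom ∧
      2 ≤ ffDegree π hY hX hdom

/-- A subset `S` of the `K`-rational points of the integral `K`-variety `X` is thin if away
from a non-dense subset it is covered by the images of the `K`-points of finitely many
integral `K`-varieties, dominant, generically finite and separable of degree ≥ 2 over `X`. -/
def IsThin {K : Type u} [Field K] {X : Scheme.{u}} (f : X ⟶ Spec (CommRingCat.of K))
    (S : Set (Spec (CommRingCat.of K) ⟶ X)) : Prop :=
  ∃ (n : ℕ) (Y : Fin n → Scheme.{u}) (π : ∀ i, Y i ⟶ X),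
    (∀ i, IsThinCover f (π i)) ∧
    ¬ Dense (imagePts (S \ ⋃ i, (· ≫ π i) '' pts (π i ≫ f)))

/-- The Hilbert property of an `R`-scheme `X` over an integral domain `R` with fraction
field `K` : the set of near-`R`-integral points, viewed inside the `K`-points of the
generic fibre `X_K`, is not thin. -/
def HilbertProperty (R K : Type u) [CommRing R] [Field K] [Algebra R K] {X : Scheme.{u}}
    (f : X ⟶ Spec (CommRingCat.of R)) : Prop :=
  ¬ IsThin (pullback.snd f (specOver R K))
      {x | x ≫ pullback.snd f (specOver R K) = 𝟙 _ ∧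
        IsNearIntegral f (x ≫ pullback.fst f (specOver R K))}

/-! ### Geometric and further properties -/

/-- A `K`-scheme is geometrically irreducible if its base change to an algebraic closure
of `K` is irreducible. -/
def GeomIrreducibleOver (K : Type u) [Field K] {Y : Scheme.{u}}
    (g : Y ⟶ Spec (CommRingCat.of K)) : Prop :=
  IrreducibleSpace (pullback g (specOver K (AlgebraicClosure K)) : Scheme.{u})

/-- A `K`-scheme is geometrically connected if its base change to an algebraic closure
of `K` is connected. -/
def GeomConnectedOver (K : Type u) [Field K] {Y : Scheme.{u}}
    (g : Y ⟶ Spec (CommRingCat.of K)) : Prop :=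
  ConnectedSpace (pullback g (specOver K (AlgebraicClosure K)) : Scheme.{u})

/-- A `K`-scheme is geometrically integral if its base change to an algebraic closure
of `K` is integral. -/
def GeomIntegralOver (K : Type u) [Field K] {Y : Scheme.{u}}
    (g : Y ⟶ Spec (CommRingCat.of K)) : Prop :=
  IsIntegral (pullback g (specOver K (AlgebraicClosure K)))

/-- A scheme is normal if all of its stalks are integrally closed domains. -/
def IsNormalScheme (X : Scheme.{u}) : Prop :=
  ∀ x : X, IsDomain (X.presheaf.stalk x) ∧ IsIntegrallyClosed (X.presheaf.stalk x)

/-- `π` is finite étale of degree `d`: finite, étale, and every geometric fibre has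
exactly `d` points. -/
def FiniteEtaleOfDegree {Y X : Scheme.{u}} (π : Y ⟶ X) (d : ℕ) : Prop :=
  IsFinite π ∧ IsEtale π ∧
    ∀ (F : Type u) [Field F] [IsAlgClosed F] (t : Spec (CommRingCat.of F) ⟶ X),
      Nat.card (pullback π t : Scheme.{u}) = d

/-- A commutative ring is regular if it is Noetherian and all of its localizations at
primes are regular local rings. -/
def IsRegularRing (R : Type u) [CommRing R] : Prop :=
  IsNoetherianRing R ∧ ∀ p : PrimeSpectrum R,
    ringKrullDim (Localization.AtPrime p.asIdeal) =
      (Module.finrank (IsLocalRing.ResidueField (Localization.AtPrime p.asIdeal))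
        (IsLocalRing.CotangentSpace (Localization.AtPrime p.asIdeal)) : WithBot (WithTop ℕ))


open TensorProduct in
lemma flat_smul_mem {R S : Type*} [CommRing R] [CommRing S] [Algebra R S] [Module.Flat R S]
    (I : Ideal R) [I.IsPrime] {a : R} (ha : a ∉ I) {y : S}
    (hy : a • y ∈ (I • ⊤ : Submodule R S)) : y ∈ (I • ⊤ : Submodule R S) := by
  set φ : (R ⧸ I) →ₗ[R] (R ⧸ I) := LinearMap.lsmul R (R ⧸ I) a with hφdef
  have hφ : Function.Injective φ := by
    rw [← LinearMap.ker_eq_bot, LinearMap.ker_eq_bot']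
    intro m hm
    obtain ⟨r, rfl⟩ := Ideal.Quotient.mk_surjective m
    have hm' : Ideal.Quotient.mk I a * Ideal.Quotient.mk I r = 0 := by
      have : a • Ideal.Quotient.mk I r = 0 := hm
      rwa [Algebra.smul_def, Ideal.Quotient.algebraMap_eq] at this
    rw [← map_mul, Ideal.Quotient.eq_zero_iff_mem] at hm'
    rw [Ideal.Quotient.eq_zero_iff_mem]
    exact (Ideal.IsPrime.mem_or_mem ‹I.IsPrime› hm').resolve_left ha
  have hinj : Function.Injective (φ.lTensor S) :=
    Module.Flat.lTensor_preserves_injective_linearMap φ hφ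
  set e := TensorProduct.tensorQuotEquivQuotSMul S I with he
  have key : e (φ.lTensor S (e.symm (Submodule.Quotient.mk y))) =
      Submodule.Quotient.mk (a • y) := by
    rw [TensorProduct.tensorQuotEquivQuotSMul_symm_mk]
    have h1 : φ (1 : R ⧸ I) = Ideal.Quotient.mk I a := by
      rw [hφdef]
      show a • (1 : R ⧸ I) = Ideal.Quotient.mk I a
      rw [Algebra.smul_def, Ideal.Quotient.algebraMap_eq, mul_one]
    rw [LinearMap.lTensor_tmul]
    show e (y ⊗ₜ[R] φ 1) = _
    rw [h1, TensorProduct.tensorQuotEquivQuotSMul_tmul_mk]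
  have h0 : (Submodule.Quotient.mk (a • y) : S ⧸ (I • ⊤ : Submodule R S)) = 0 :=
    (Submodule.Quotient.mk_eq_zero _).mpr hy
  rw [h0] at key
  have h1 : φ.lTensor S (e.symm (Submodule.Quotient.mk y)) = 0 :=
    (map_eq_zero_iff e e.injective).mp key
  have : e.symm (Submodule.Quotient.mk y) = 0 := hinj (by rw [h1, map_zero])
  have : (Submodule.Quotient.mk y : S ⧸ (I • ⊤ : Submodule R S)) = 0 := by
    have := congrArg e this
    rwa [LinearEquiv.apply_symm_apply, map_zero] at this
  exact (Submodule.Quotient.mk_eq_zero _).mp this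


lemma going_down {R S : Type*} [CommRing R] [CommRing S] [Algebra R S] [Module.Flat R S]
    (q : Ideal S) [q.IsPrime] (p' : Ideal R) [p'.IsPrime]
    (hle : p' ≤ q.comap (algebraMap R S)) :
    ∃ q' : Ideal S, q'.IsPrime ∧ q' ≤ q ∧ q'.comap (algebraMap R S) = p' := by
  set f := algebraMap R S
  set T : Submonoid S :=
    { carrier := {x | ∃ s ∈ q.primeCompl, ∃ a ∈ p'.primeCompl, x = s * f a}
      mul_mem' := by
        rintro x y ⟨s, hs, a, ha, rfl⟩ ⟨t, ht, b, hb, rfl⟩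
        exact ⟨s * t, q.primeCompl.mul_mem hs ht, a * b, p'.primeCompl.mul_mem ha hb,
          by rw [map_mul]; ring⟩
      one_mem' := ⟨1, q.primeCompl.one_mem, 1, p'.primeCompl.one_mem, by simp⟩ } with hT
  have hmem : ∀ x ∈ (p'.map f : Ideal S), x ∈ (p' • ⊤ : Submodule R S) := by
    intro x hx
    rw [Ideal.smul_top_eq_map]
    exact hx
  have hdisj : Disjoint ((p'.map f : Ideal S) : Set S) (T : Set S) := by
    rw [Set.disjoint_left]
    rintro x hx ⟨s, hs, a, ha, rfl⟩
    have h1 : a • s ∈ (p' • ⊤ : Submodule R S) := by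
      have := hmem _ hx
      rwa [show a • s = s * f a from by rw [Algebra.smul_def]; ring]
    have h2 : s ∈ (p' • ⊤ : Submodule R S) := flat_smul_mem p' ha h1
    rw [Ideal.smul_top_eq_map] at h2
    have h3 : s ∈ q := (Ideal.map_le_iff_le_comap.mpr hle) h2
    exact hs h3
  obtain ⟨P, hP, hle', hdisj'⟩ := Ideal.exists_le_prime_disjoint (p'.map f) T hdisj
  refine ⟨P, hP, ?_, ?_⟩
  · intro x hx
    by_contra hxq
    exact Set.disjoint_left.mp hdisj' hx ⟨x, hxq, 1, p'.primeCompl.one_mem, by simp⟩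
  · apply le_antisymm
    · intro a haP
      by_contra hap'
      exact Set.disjoint_left.mp hdisj' (show f a ∈ P from haP)
        ⟨1, q.primeCompl.one_mem, a, hap', by simp⟩
    · exact le_trans Ideal.le_comap_map (Ideal.comap_mono hle')

lemma height_two_of_comap {R S : Type*} [CommRing R] [CommRing S] [Algebra R S]
    [Module.Flat R S] (q : PrimeSpectrum S)
    (h : 2 ≤ Order.height (PrimeSpectrum.comap (algebraMap R S) q)) :
    2 ≤ Order.height q := by
  haveI := q.2
  obtain ⟨p, hlast, hlen⟩ := Order.exists_series_of_le_height
      (PrimeSpectrum.comap (algebraMap R S) q) (n := 2) (by exact_mod_cast h)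
  set i0 : Fin p.length := ⟨0, by omega⟩
  set i1 : Fin p.length := ⟨1, by omega⟩
  have h01 : p i0.castSucc < p i0.succ := p.step i0
  have h12 : p i1.castSucc < p i1.succ := p.step i1
  have hsucc : i0.succ = i1.castSucc := rfl
  have hlast2 : p i1.succ = p.last := congrArg p (Fin.ext (by simp [i1, hlen, RelSeries.last]))
  set b := p i0.castSucc
  set c := p i0.succ
  have hcq : c < PrimeSpectrum.comap (algebraMap R S) q := by
    rw [← hlast, ← hlast2]
    show p.toFun i0.succ < p.toFun i1.succ
    rw [hsucc]
    exact h12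
  haveI := b.2
  haveI := c.2
  have hle1 : c.asIdeal ≤ q.asIdeal.comap (algebraMap R S) := le_of_lt hcq
  obtain ⟨q1, hq1p, hq1le, hq1comap⟩ := going_down q.asIdeal c.asIdeal hle1
  haveI := hq1p
  set Q1 : PrimeSpectrum S := ⟨q1, hq1p⟩
  have hQ1q : Q1 < q := by
    refine lt_of_le_of_ne hq1le ?_
    intro hEq
    have : c.asIdeal = q.asIdeal.comap (algebraMap R S) := by
      rw [← hq1comap]; exact congrArg (Ideal.comap _) (congrArg PrimeSpectrum.asIdeal hEq)
    have hc' : c = PrimeSpectrum.comap (algebraMap R S) q := PrimeSpectrum.ext this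
    rw [hc'] at hcq
    exact lt_irrefl _ hcq
  have hle2 : b.asIdeal ≤ q1.comap (algebraMap R S) := by
    rw [hq1comap]; exact le_of_lt h01
  obtain ⟨q0, hq0p, hq0le, hq0comap⟩ := going_down q1 b.asIdeal hle2
  haveI := hq0p
  set Q0 : PrimeSpectrum S := ⟨q0, hq0p⟩
  have hQ01 : Q0 < Q1 := by
    refine lt_of_le_of_ne hq0le ?_
    intro hEq
    have : b.asIdeal = c.asIdeal := by
      rw [← hq0comap, ← hq1comap]
      exact congrArg (Ideal.comap _) (congrArg PrimeSpectrum.asIdeal hEq)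
    exact absurd h01 (by simp [show b = c from PrimeSpectrum.ext this, lt_irrefl])
  set ch : LTSeries (PrimeSpectrum S) :=
    ⟨2, ![Q0, Q1, q], by
      intro i
      fin_cases i
      · simpa using hQ01
      · simpa using hQ1q⟩
  have hle3 : ch.last ≤ q := by
    show (![Q0, Q1, q] : Fin 3 → PrimeSpectrum S) (Fin.last 2) ≤ q
    exact le_of_eq rfl
  have := Order.length_le_height (p := ch) hle3
  have hl : ch.length = 2 := rfl
  rw [hl] at this
  exact_mod_cast this


/-- For a finite flat extension `R ⊆ S` of `ℤ`-finitely generated domains of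
characteristic zero, near-`R`-integral points of `X` base change to near-`S`-integral points
of `X_S`. -/
theorem statement12 (R S K L : Type u) [CommRing R] [IsDomain R] [CommRing S] [IsDomain S]
    [Algebra.FiniteType ℤ R] [Algebra.FiniteType ℤ S] [CharZero R] [CharZero S]
    [Algebra R S] [Module.Finite R S] [Module.Flat R S]
    (hinj : Function.Injective (algebraMap R S))
    [Field K] [Field L] [Algebra R K] [IsFractionRing R K] [Algebra S L] [IsFractionRing S L]
    [Algebra K L] [Algebra R L] [IsScalarTower R K L] [IsScalarTower R S L]
    {X : Scheme.{u}} (f : X ⟶ Spec (CommRingCat.of R)) (hX : IsArithmeticOver f)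
    (x : Spec (CommRingCat.of K) ⟶ X) (hx : IsNearIntegral f x) :
    ∀ y : Spec (CommRingCat.of L) ⟶ pullback f (specOver R S),
      y ≫ pullback.fst f (specOver R S) = specOver K L ≫ x →
      y ≫ pullback.snd f (specOver R S) = specOver S L →
      IsNearIntegral (pullback.snd f (specOver R S)) y := by
  intro y hy1 hy2
  obtain ⟨U, hUdense, hUcodim, w, t, hwf, htι, htw⟩ := hx
  have hcomp : specOver S L ≫ specOver R S = (specOver K L ≫ t) ≫ U.ι := by
    rw [Category.assoc, htι]
    show specOver S L ≫ specOver R S = specOver K L ≫ specOver R K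
    unfold specOver
    rw [← Spec.map_comp, ← Spec.map_comp]
    congr 1
    show CommRingCat.ofHom ((algebraMap S L).comp (algebraMap R S)) =
      CommRingCat.ofHom ((algebraMap K L).comp (algebraMap R K))
    rw [← IsScalarTower.algebraMap_eq, ← IsScalarTower.algebraMap_eq]
  set V : (Spec (CommRingCat.of S)).Opens := specOver R S ⁻¹ᵁ U with hV
  have hmemV : ∀ z : ↑(Spec (CommRingCat.of L)), (specOver S L).base z ∈ V.1 := by
    intro z
    show (specOver R S).base ((specOver S L).base z) ∈ U.1
    have hz : (specOver R S).base ((specOver S L).base z) =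
        U.ι.base ((specOver K L ≫ t).base z) := by
      have := congrArg (fun m : Spec (CommRingCat.of L) ⟶ Spec (CommRingCat.of R) =>
        m.base z) hcomp
      simpa using this
    rw [hz]
    have : U.ι.base ((specOver K L ≫ t).base z) ∈ Set.range U.ι.base :=
      Set.mem_range_self _
    rwa [Scheme.Opens.range_ι] at this
  refine ⟨V, ?_, ?_, ?_⟩
  · -- density
    haveI : IrreducibleSpace (PrimeSpectrum S) := inferInstance
    have hne : (V.1 : Set (PrimeSpectrum S)).Nonempty := by
      have : Nonempty ↑(Spec (CommRingCat.of L)) := by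
        show Nonempty (PrimeSpectrum L)
        infer_instance
      obtain ⟨z⟩ := this
      exact ⟨_, hmemV z⟩
    haveI : PreirreducibleSpace ↑(Spec (CommRingCat.of S)) :=
      (inferInstance : PreirreducibleSpace (PrimeSpectrum S))
    exact V.2.dense hne
  · -- codimension
    intro qpt hq
    exact height_two_of_comap (R := R) (S := S) qpt (hUcodim ((specOver R S).base qpt) hq)
  · -- extension
    have hlift : ((specOver R S ∣_ U) ≫ w) ≫ f = V.ι ≫ specOver R S := by
      rw [Category.assoc, hwf, morphismRestrict_ι]
    set w' : (V : Scheme.{u}) ⟶ pullback f (specOver R S) :=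
      pullback.lift ((specOver R S ∣_ U) ≫ w) V.ι hlift with hw'
    have hrange : Set.range (specOver S L).base ⊆ Set.range V.ι.base := by
      rw [Scheme.Opens.range_ι]
      rintro _ ⟨z, rfl⟩
      exact hmemV z
    set t' : Spec (CommRingCat.of L) ⟶ (V : Scheme.{u}) :=
      IsOpenImmersion.lift V.ι (specOver S L) hrange with ht'
    have ht'ι : t' ≫ V.ι = specOver S L := IsOpenImmersion.lift_fac _ _ hrange
    have hkey : t' ≫ (specOver R S ∣_ U) = specOver K L ≫ t := by
      rw [← cancel_mono U.ι]
      rw [Category.assoc, morphismRestrict_ι, ← Category.assoc, ht'ι, hcomp]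
    refine ⟨w', t', pullback.lift_snd _ _ _, ht'ι, ?_⟩
    apply pullback.hom_ext
    · rw [Category.assoc, hw', pullback.lift_fst, ← Category.assoc, hkey,
        Category.assoc, htw, hy1]
    · rw [Category.assoc, hw', pullback.lift_snd, ht'ι, hy2]

end ArithHilbert
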